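/- The kernel of 𝓛 = J∘L is the two-dimensional space generated by v₁(x) = (0, 1/cosh x) and v₂(x) = (1/cosh x, 0): if r = (r₁,r₂) : ℝ → ℝ² is twice continuously differentiable with both components square-integrable on ℝ and satisfies J(L r₁(x), L r₂(x)) = 0 for all x ∈ ℝ, then there exist a, b ∈ ℝ such that r₁(x) = a/cosh x and r₂(x) = b/cosh x for all x. -/

import Mathlib

open MeasureTheory

/-- The Schrödinger operator `L f = -f'' + (2 tanh² - 1) f`. -/
noncomputable def Lop (f : ℝ → ℝ) (x : ℝ) : ℝ :=
  -deriv (deriv f) x + (2 * Real.tanh x ^ 2 - 1) * f x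

/-- The matrix `J = [[-1,-1],[1,-1]]`. -/
def Jmat : Matrix (Fin 2) (Fin 2) ℝ := !![-1, -1; 1, -1]

/-!
Since `det J = 2`, both components of `r` solve `L f = 0`. One solution is `sech`; as the
equation has no first-order term, the Wronskian `f' sech - f sech'` of any solution `f` with
`sech` is constant, which integrates to `f cosh = a + c (x + sinh x cosh x) / 2`. For `c ≠ 0`
this `f` grows like `sinh`, so it is square-integrable only when `c = 0`.
-/

open Real Filter

lemma not_integrable_of_tendsto_atTop {g : ℝ → ℝ} (hg : Tendsto g atTop atTop) :
    ¬ Integrable g := by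
  intro hint
  obtain ⟨M, hM⟩ := eventually_atTop.1 (hg.eventually_ge_atTop 1)
  have hsub : volume (Set.Ici M) ≤ volume {x | 1 ≤ ‖g x‖} :=
    measure_mono fun x hx => (hM x hx).trans (le_abs_self _)
  exact (hsub.trans_lt (hint.measure_norm_ge_lt_top one_pos)).ne (by simp)

lemma hasDerivAt_wronskian_sech {f f' : ℝ → ℝ} (hf : ∀ x, HasDerivAt f (f' x) x)
    (hf' : ∀ x, HasDerivAt f' ((2 * tanh x ^ 2 - 1) * f x) x) (x : ℝ) :
    HasDerivAt (fun x => (f' x * cosh x + f x * sinh x) / cosh x ^ 2) 0 x := by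
  have hnum := ((hf' x).mul (hasDerivAt_cosh x)).add ((hf x).mul (hasDerivAt_sinh x))
  refine (hnum.div ((hasDerivAt_cosh x).pow 2) (pow_ne_zero 2 (cosh_pos x).ne')).congr_deriv ?_
  simp only [Pi.add_apply, Pi.mul_apply, Pi.pow_apply, tanh_eq_sinh_div_cosh, Nat.cast_ofNat]
  field_simp
  ring

lemma wronskian_sech_eq {f f' : ℝ → ℝ} (hf : ∀ x, HasDerivAt f (f' x) x)
    (hf' : ∀ x, HasDerivAt f' ((2 * tanh x ^ 2 - 1) * f x) x) (x : ℝ) :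
    f' x * cosh x + f x * sinh x = f' 0 * cosh x ^ 2 := by
  have hW := hasDerivAt_wronskian_sech hf hf'
  have hconst := is_const_of_deriv_eq_zero (fun y => (hW y).differentiableAt)
    (fun y => (hW y).deriv) x 0
  simp only [cosh_zero, sinh_zero] at hconst
  field_simp at hconst
  linarith

lemma mul_cosh_eq_of_hasDerivAt {f f' : ℝ → ℝ} (hf : ∀ x, HasDerivAt f (f' x) x)
    (hf' : ∀ x, HasDerivAt f' ((2 * tanh x ^ 2 - 1) * f x) x) (x : ℝ) :
    f x * cosh x = f 0 + f' 0 * (x + sinh x * cosh x) / 2 := by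
  set φ : ℝ → ℝ := fun x => f x * cosh x - f' 0 * (x + sinh x * cosh x) / 2
  have hφ : ∀ y, HasDerivAt φ 0 y := fun y => by
    have h := ((hf y).mul (hasDerivAt_cosh y)).sub
      ((((hasDerivAt_id y).add ((hasDerivAt_sinh y).mul (hasDerivAt_cosh y))).const_mul
        (f' 0)).div_const 2)
    refine h.congr_deriv ?_
    linear_combination wronskian_sech_eq hf hf' y + f' 0 / 2 * cosh_sq y
  have hconst := is_const_of_deriv_eq_zero (fun y => (hφ y).differentiableAt)
    (fun y => (hφ y).deriv) x 0
  simp only [φ, cosh_zero, sinh_zero] at hconst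
  linarith

lemma tendsto_sq_atTop_of_mul_cosh_eq {f : ℝ → ℝ} {a c : ℝ} (hc : c ≠ 0)
    (h : ∀ x, f x * cosh x = a + c * (x + sinh x * cosh x) / 2) :
    Tendsto (fun x => f x ^ 2) atTop atTop := by
  have hlower : ∀ x, 0 ≤ x → |c| / 2 * x - |a| ≤ |f x| := by
    intro x hx
    have hsinh : x ≤ sinh x := self_le_sinh_iff.2 hx
    have hX : 0 ≤ x + sinh x * cosh x := by nlinarith [cosh_pos x]
    have hmul : |c| * (x + sinh x * cosh x) / 2 - |a| ≤ |f x| * cosh x := by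
      have htri := abs_sub_abs_le_abs_sub (c * (x + sinh x * cosh x) / 2) (-a)
      rwa [abs_neg, sub_neg_eq_add, abs_div, abs_mul, abs_of_nonneg hX, abs_two, add_comm _ a, ← h x,
        abs_mul, abs_of_pos (cosh_pos x)] at htri
    refine le_of_mul_le_mul_right ?_ (cosh_pos x)
    nlinarith [one_le_cosh x, abs_nonneg a, abs_nonneg c,
      mul_le_mul_of_nonneg_left hsinh (mul_nonneg (abs_nonneg c) (cosh_pos x).le)]
  have hlin : Tendsto (fun x => |c| / 2 * x - |a|) atTop atTop :=
    tendsto_atTop_add_const_right _ _ (tendsto_id.const_mul_atTop (by positivity))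
  have habs : Tendsto (fun x => |f x|) atTop atTop :=
    tendsto_atTop_mono' _ ((eventually_ge_atTop 0).mono hlower) hlin
  simpa only [Function.comp_def, sq_abs] using (tendsto_pow_atTop two_ne_zero).comp habs

lemma exists_eq_div_cosh_of_Lop_eq_zero {f : ℝ → ℝ} (hf : ContDiff ℝ 2 f)
    (hL2 : Integrable fun x => f x ^ 2) (hLf : ∀ x, Lop f x = 0) :
    ∃ a : ℝ, ∀ x, f x = a / cosh x := by
  have hd : Differentiable ℝ f := hf.differentiable (by norm_num)
  have hd' : Differentiable ℝ (deriv f) := hf.differentiable_deriv_two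
  have hf' : ∀ x, HasDerivAt (deriv f) ((2 * tanh x ^ 2 - 1) * f x) x := fun x => by
    have hx : deriv (deriv f) x = (2 * tanh x ^ 2 - 1) * f x := by
      have := hLf x
      rw [Lop] at this
      linarith
    exact hx ▸ (hd' x).hasDerivAt
  have hsol := mul_cosh_eq_of_hasDerivAt (fun x => (hd x).hasDerivAt) hf'
  have hc : deriv f 0 = 0 := by
    by_contra hc
    exact not_integrable_of_tendsto_atTop (tendsto_sq_atTop_of_mul_cosh_eq hc hsol) hL2
  refine ⟨f 0, fun x => ?_⟩
  rw [eq_div_iff (cosh_pos x).ne', hsol x, hc]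
  ring

lemma det_Jmat : Jmat.det = 2 := by
  rw [Jmat, Matrix.det_fin_two_of]
  norm_num

lemma eq_zero_of_Jmat_mulVec_eq_zero {v : Fin 2 → ℝ} (h : Jmat.mulVec v = 0) : v = 0 :=
  Matrix.eq_zero_of_mulVec_eq_zero (by rw [det_Jmat]; norm_num) h

/-- The kernel of `𝓛 = J ∘ L` is the two-dimensional space generated by
`v₁(x) = (0, 1/cosh x)` and `v₂(x) = (1/cosh x, 0)`. -/
theorem ker_cL_two_dimensional (r1 r2 : ℝ → ℝ)
    (h1 : ContDiff ℝ 2 r1) (h2 : ContDiff ℝ 2 r2)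
    (hL2_1 : Integrable (fun x => r1 x ^ 2)) (hL2_2 : Integrable (fun x => r2 x ^ 2))
    (hker : ∀ x : ℝ, Jmat.mulVec ![Lop r1 x, Lop r2 x] = 0) :
    ∃ a b : ℝ, ∀ x : ℝ, r1 x = a / Real.cosh x ∧ r2 x = b / Real.cosh x := by
  have hL : ∀ x, Lop r1 x = 0 ∧ Lop r2 x = 0 := fun x => by
    have hv := eq_zero_of_Jmat_mulVec_eq_zero (hker x)
    exact ⟨congrFun hv 0, congrFun hv 1⟩
  obtain ⟨a, ha⟩ := exists_eq_div_cosh_of_Lop_eq_zero h1 hL2_1 fun x => (hL x).1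
  obtain ⟨b, hb⟩ := exists_eq_div_cosh_of_Lop_eq_zero h2 hL2_2 fun x => (hL x).2
  exact ⟨a, b, fun x => ⟨ha x, hb x⟩⟩
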